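/- For Λ ≥ 1, the constant B_Λ = (1/π)∫₀^{Λ/√(1+Λ²)} (z² - z⁴/3)/(1-z²) dz satisfies B_Λ ≤ (2/(3π)) log(√(1+Λ²)(Λ + √(1+Λ²))) ≤ (4/(3π)) log√(1+4Λ²). -/

import Mathlib

open Real

/-- `E x = √(1+x²)`. -/
noncomputable def E (x : ℝ) : ℝ := Real.sqrt (1 + x ^ 2)

/-- `Z_Λ(r)`, extended by continuity at `r = 0`. -/
noncomputable def ZL (Λ r : ℝ) : ℝ :=
  if r = 0 then Λ / E Λ else (E Λ - E (Λ - r)) / r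

/-- The cut-off function `B_Λ(r)`. -/
noncomputable def BL (Λ r : ℝ) : ℝ :=
  1 / π * (∫ z in (0:ℝ)..ZL Λ r,
      (z ^ 2 - z ^ 4 / 3) / ((1 - z ^ 2) * (1 + r ^ 2 * (1 - z ^ 2) / 4)))
    + r / (2 * π) * (∫ z in (0:ℝ)..ZL Λ r, (z - z ^ 3 / 3) / (E Λ - r * z / 2))

/-- The constant `B_Λ = B_Λ(0) = (1/π)∫₀^{Λ/E(Λ)} (z² - z⁴/3)/(1-z²) dz`. -/
noncomputable def BC (Λ : ℝ) : ℝ := BL Λ 0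

/-- The cut-off Uehling multiplier `U_Λ`. -/
noncomputable def UL (Λ r : ℝ) : ℝ :=
  if 0 ≤ r ∧ r ≤ 2 * Λ then BC Λ - BL Λ r else 0

/-- The Uehling multiplier `U`. -/
noncomputable def U (r : ℝ) : ℝ :=
  r ^ 2 / (4 * π) * ∫ z in (0:ℝ)..1, (z ^ 2 - z ^ 4 / 3) / (1 + r ^ 2 * (1 - z ^ 2) / 4)

set_option maxHeartbeats 1000000 in
theorem BC_log_bound (Λ : ℝ) (hΛ : 1 ≤ Λ) :
    BC Λ ≤ 2 / (3 * π) * Real.log (Real.sqrt (1 + Λ ^ 2) * (Λ + Real.sqrt (1 + Λ ^ 2))) ∧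
    2 / (3 * π) * Real.log (Real.sqrt (1 + Λ ^ 2) * (Λ + Real.sqrt (1 + Λ ^ 2)))
      ≤ 4 / (3 * π) * Real.log (Real.sqrt (1 + 4 * Λ ^ 2)) := by
  have hπ : (0:ℝ) < π := Real.pi_pos
  set Ev := Real.sqrt (1 + Λ ^ 2) with hEv
  have hEsq : Ev ^ 2 = 1 + Λ ^ 2 := Real.sq_sqrt (by nlinarith)
  have hEpos : 0 < Ev := Real.sqrt_pos.mpr (by nlinarith)
  have hE1 : (1:ℝ) ≤ Ev := by nlinarith
  have hΛE : Λ < Ev := by nlinarith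
  set a := Λ / Ev with ha
  have ha0 : 0 ≤ a := div_nonneg (by linarith) hEpos.le
  have ha1 : a < 1 := (div_lt_one hEpos).mpr hΛE
  have hBC : BC Λ = 1 / π * ∫ z in (0:ℝ)..a, (z ^ 2 - z ^ 4 / 3) / (1 - z ^ 2) := by
    simp [BC, BL, ZL, E, ← hEv, ha]
  -- pointwise bound and integrability
  have hden : ∀ z ∈ Set.Icc (0:ℝ) a, (1 : ℝ) - z ^ 2 ≠ 0 := by
    intro z hz
    have h1 : z < 1 := lt_of_le_of_lt hz.2 ha1
    nlinarith [hz.1]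
  have hcf : ContinuousOn (fun z : ℝ => (z ^ 2 - z ^ 4 / 3) / (1 - z ^ 2)) (Set.Icc 0 a) := by
    apply ContinuousOn.div (by fun_prop) (by fun_prop) hden
  have hcg : ContinuousOn (fun z : ℝ => 1/3 * (1 / (1 + z) + 1 / (1 - z))) (Set.Icc 0 a) := by
    apply ContinuousOn.mul continuousOn_const
    apply ContinuousOn.add
    · apply ContinuousOn.div continuousOn_const (by fun_prop)
      intro z hz; nlinarith [hz.1]
    · apply ContinuousOn.div continuousOn_const (by fun_prop)
      intro z hz; have h1 : z < 1 := lt_of_le_of_lt hz.2 ha1; nlinarith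
  have hIf : IntervalIntegrable (fun z : ℝ => (z ^ 2 - z ^ 4 / 3) / (1 - z ^ 2))
      MeasureTheory.volume 0 a := by
    apply ContinuousOn.intervalIntegrable
    rwa [Set.uIcc_of_le ha0]
  have hIg : IntervalIntegrable (fun z : ℝ => 1/3 * (1 / (1 + z) + 1 / (1 - z)))
      MeasureTheory.volume 0 a := by
    apply ContinuousOn.intervalIntegrable
    rwa [Set.uIcc_of_le ha0]
  have hmono : (∫ z in (0:ℝ)..a, (z ^ 2 - z ^ 4 / 3) / (1 - z ^ 2))
      ≤ ∫ z in (0:ℝ)..a, 1/3 * (1 / (1 + z) + 1 / (1 - z)) := by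
    apply intervalIntegral.integral_mono_on ha0 hIf hIg
    intro z hz
    have h0 : 0 ≤ z := hz.1
    have h1 : z < 1 := lt_of_le_of_lt hz.2 ha1
    have hp : (0:ℝ) < 1 - z ^ 2 := by nlinarith
    have hq : (0:ℝ) < 1 + z := by linarith
    have hr : (0:ℝ) < 1 - z := by linarith
    rw [div_le_iff₀ hp]
    have hg : 1/3 * (1 / (1 + z) + 1 / (1 - z)) = 2/3 / (1 - z ^ 2) := by
      field_simp; ring
    rw [hg, div_mul_eq_mul_div, le_div_iff₀ hp]
    nlinarith [sq_nonneg (1 - z^2)]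
  -- compute the majorant integral via FTC
  have hFTC : (∫ z in (0:ℝ)..a, 1/3 * (1 / (1 + z) + 1 / (1 - z)))
      = 1/3 * (Real.log (1 + a) - Real.log (1 - a)) := by
    have h := intervalIntegral.integral_eq_sub_of_hasDerivAt
        (f := fun z : ℝ => 1/3 * (Real.log (1 + z) - Real.log (1 - z)))
        (f' := fun z : ℝ => 1/3 * (1 / (1 + z) + 1 / (1 - z)))
        (a := 0) (b := a) ?_ ?_
    · simpa using h
    · intro z hz
      rw [Set.uIcc_of_le ha0] at hz
      have h0 : 0 ≤ z := hz.1
      have h1 : z < 1 := lt_of_le_of_lt hz.2 ha1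
      have d1 : HasDerivAt (fun z : ℝ => Real.log (1 + z)) (1 / (1 + z)) z := by
        have := ((hasDerivAt_id z).const_add 1).log (by simp only [id_eq]; intro h; exact absurd h (by nlinarith))
        simpa using this
      have d2 : HasDerivAt (fun z : ℝ => Real.log (1 - z)) (-(1 / (1 - z))) z := by
        have := ((hasDerivAt_id z).const_sub 1).log (by simp only [id_eq]; intro h; exact absurd h (by nlinarith))
        simpa [neg_div] using this
      have := ((d1.sub d2).const_mul (1/3 : ℝ))
      exact this.congr_deriv (by ring)
    · exact hIg
  -- value of the majorant
  have h1a : (1:ℝ) + a = (Ev + Λ) / Ev := by rw [eq_div_iff hEpos.ne', ha]; field_simp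
  have h1a' : (1:ℝ) - a = (Ev - Λ) / Ev := by rw [eq_div_iff hEpos.ne', ha]; field_simp
  have hEΛpos : 0 < Ev + Λ := by linarith
  have hEmΛpos : 0 < Ev - Λ := by linarith
  have hratio : (1 + a) / (1 - a) = (Λ + Ev) ^ 2 := by
    rw [h1a, h1a']
    field_simp
    nlinarith
  have hlogval : 1/3 * (Real.log (1 + a) - Real.log (1 - a)) = 2/3 * Real.log (Λ + Ev) := by
    rw [← Real.log_div (by positivity) (by rw [h1a']; positivity), hratio,
      Real.log_pow]
    push_cast
    ring
  have hlog1 : Real.log (Λ + Ev) ≤ Real.log (Ev * (Λ + Ev)) := by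
    apply Real.log_le_log (by positivity)
    nlinarith
  constructor
  · rw [hBC]
    calc 1 / π * ∫ z in (0:ℝ)..a, (z ^ 2 - z ^ 4 / 3) / (1 - z ^ 2)
        ≤ 1 / π * (2/3 * Real.log (Λ + Ev)) := by
          apply mul_le_mul_of_nonneg_left _ (by positivity)
          rw [← hlogval, ← hFTC]; exact hmono
      _ ≤ 1 / π * (2/3 * Real.log (Ev * (Λ + Ev))) := by
          exact mul_le_mul_of_nonneg_left
            (mul_le_mul_of_nonneg_left hlog1 (by norm_num)) (by positivity)
      _ = 2 / (3 * π) * Real.log (Ev * (Λ + Ev)) := by ring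
  · have hsq : Real.log (Real.sqrt (1 + 4 * Λ ^ 2)) = Real.log (1 + 4 * Λ ^ 2) / 2 :=
      Real.log_sqrt (by nlinarith)
    rw [hsq]
    have harg : Ev * (Λ + Ev) ≤ 1 + 4 * Λ ^ 2 := by nlinarith
    have hlog2 : Real.log (Ev * (Λ + Ev)) ≤ Real.log (1 + 4 * Λ ^ 2) :=
      Real.log_le_log (by positivity) harg
    rw [show 4 / (3 * π) * (Real.log (1 + 4 * Λ ^ 2) / 2)
        = 2 / (3 * π) * Real.log (1 + 4 * Λ ^ 2) by ring]
    exact mul_le_mul_of_nonneg_left hlog2 (by positivity)
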